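/- arXiv:2501.18105 — 6 statements merged into one kernel-verified Lean document; each statement's English description precedes it below -/
import Mathlib

section
/- If C_j < θ(C_j + M_j) where θ = (K+1-γ)/(2K+2-γ), C_j = C*_j - (γ-1)r·F*_j, M_j ≤ D_j = C*_j + r·F*_j, 0 ≤ r ≤ 1, 1 < γ < 2, and K > γ - 1, then C*_j ≤ K·F*_j. -/
/-- Lemma 3.1 (weird client): if `C_j < θ (C_j + M_j)` with
`θ = (K+1-γ)/(2K+2-γ)`, then `C*_j ≤ K F*_j`. -/
theorem weird_client (Cs Fs r γ K Cj Mj Dj θ : ℝ)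
    (hCs : 0 ≤ Cs) (hFs : 0 ≤ Fs)
    (hr0 : 0 ≤ r) (hr1 : r ≤ 1)
    (hγ1 : 1 < γ) (hγ2 : γ < 2)
    (hK : γ - 1 < K)
    (hθ : θ = (K + 1 - γ) / (2 * K + 2 - γ))
    (hCj : Cj = Cs - (γ - 1) * r * Fs)
    (hDj : Dj = Cs + r * Fs)
    (hCM : Cj ≤ Mj) (hMD : Mj ≤ Dj)
    (hweird : Cj < θ * (Cj + Mj)) :
    Cs ≤ K * Fs := by
  have hd : 0 < 2 * K + 2 - γ := by linarith
  have hθd : θ * (2 * K + 2 - γ) = K + 1 - γ := by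
    rw [hθ]; exact div_mul_cancel₀ _ hd.ne'
  have h1 : Cj * (2 * K + 2 - γ) < (K + 1 - γ) * (Cj + Mj) := by
    calc Cj * (2 * K + 2 - γ) < (θ * (Cj + Mj)) * (2 * K + 2 - γ) := by
          exact mul_lt_mul_of_pos_right hweird hd
      _ = (K + 1 - γ) * (Cj + Mj) := by rw [mul_right_comm, hθd]
  have hrF : r * Fs ≤ Fs := by nlinarith
  have hK1 : (0:ℝ) < K + 1 - γ := by linarith
  have h2 : Cj * (2 * K + 2 - γ) < (K + 1 - γ) * (Cj + Dj) := by
    refine lt_of_lt_of_le h1 ?_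
    have := mul_le_mul_of_nonneg_left (show Cj + Mj ≤ Cj + Dj by linarith) hK1.le
    linarith
  rw [hCj, hDj] at h2
  have h3 : γ * Cs < γ * (K * (r * Fs)) := by nlinarith [h2]
  have h4 : Cs < K * (r * Fs) := lt_of_mul_lt_mul_left h3 (by linarith)
  have hK0 : (0:ℝ) ≤ K := by linarith
  nlinarith [mul_le_mul_of_nonneg_left hrF hK0]
end

section
/- In ℝⁿ (any dimension n), the maximum number of points on the unit sphere such that the angular distance between any two distinct points is greater than π/2 + 2ε is at most 1 + 1/sin(2ε), for any ε ∈ (0, π/4). -/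
/-- Rankin's bound: in any dimension, a set of unit vectors with pairwise angular
distance greater than `π/2 + 2ε` has cardinality at most `1 + 1/sin(2ε)`. -/
theorem rankin_bound (n : ℕ) (ε : ℝ) (hε : ε ∈ Set.Ioo 0 (Real.pi / 4))
    (S : Finset (EuclideanSpace ℝ (Fin n)))
    (hunit : ∀ p ∈ S, ‖p‖ = 1)
    (hang : ∀ p ∈ S, ∀ q ∈ S, p ≠ q →
      Real.pi / 2 + 2 * ε < InnerProductGeometry.angle p q) :
    (S.card : ℝ) ≤ 1 + 1 / Real.sin (2 * ε) := by
  classical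
  obtain ⟨hε0, hε4⟩ := hε
  have hpi := Real.pi_pos
  set s := Real.sin (2 * ε) with hs_def
  have hs : 0 < s := Real.sin_pos_of_pos_of_lt_pi (by linarith) (by linarith)
  -- pairwise inner ℝ product bound
  have key : ∀ p ∈ S, ∀ q ∈ S, p ≠ q → (inner ℝ p q : ℝ) ≤ -s := by
    intro p hp q hq hpq
    have hcos := InnerProductGeometry.cos_angle p q
    rw [hunit p hp, hunit q hq] at hcos
    simp only [mul_one, div_one] at hcos
    have hang' := hang p hp q hq hpq
    have h1 : Real.cos (InnerProductGeometry.angle p q) <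
        Real.cos (Real.pi / 2 + 2 * ε) := by
      apply Real.cos_lt_cos_of_nonneg_of_le_pi (by linarith)
      · exact InnerProductGeometry.angle_le_pi p q
      · exact hang'
    have h2 : Real.cos (Real.pi / 2 + 2 * ε) = -s := by
      rw [Real.cos_add]; simp [hs_def]
    rw [hcos, h2] at h1
    linarith
  set N := S.card with hN
  rcases le_or_gt N 1 with h1 | h2
  · have : (N : ℝ) ≤ 1 := by exact_mod_cast h1
    have : 0 < 1 / s := by positivity
    linarith
  · -- 0 ≤ ‖∑ p‖²
    have hnn : (0 : ℝ) ≤ inner ℝ (∑ p ∈ S, p) (∑ p ∈ S, p) := real_inner_self_nonneg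
    rw [inner_sum] at hnn
    have hexp : ∀ p ∈ S, (inner ℝ (∑ q ∈ S, q) p : ℝ) = ∑ q ∈ S, inner ℝ q p := by
      intro p _; rw [sum_inner]
    rw [Finset.sum_congr rfl hexp] at hnn
    have hrow : ∀ p ∈ S, (∑ q ∈ S, (inner ℝ q p : ℝ)) ≤ 1 + (N - 1) * (-s) := by
      intro p hp
      rw [← Finset.sum_erase_add _ _ hp]
      have h1 : (inner ℝ p p : ℝ) = 1 := by
        rw [real_inner_self_eq_norm_sq, hunit p hp]; norm_num
      have h2 : (∑ q ∈ S.erase p, (inner ℝ q p : ℝ)) ≤ (S.erase p).card • (-s) := by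
        apply Finset.sum_le_card_nsmul
        intro q hq
        exact key q (Finset.mem_of_mem_erase hq) p hp (Finset.ne_of_mem_erase hq)
      rw [Finset.card_erase_of_mem hp] at h2
      have hNpos : 1 ≤ N := by omega
      have : ((N - 1 : ℕ) : ℝ) = (N : ℝ) - 1 := by
        push_cast [Nat.cast_sub hNpos]; ring
      rw [nsmul_eq_mul, this] at h2
      linarith
    have htot : (∑ p ∈ S, ∑ q ∈ S, (inner ℝ q p : ℝ)) ≤ N * (1 + (N - 1) * (-s)) := by
      calc (∑ p ∈ S, ∑ q ∈ S, (inner ℝ q p : ℝ))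
          ≤ ∑ _p ∈ S, (1 + (N - 1) * (-s)) := Finset.sum_le_sum hrow
        _ = N * (1 + (N - 1) * (-s)) := by rw [Finset.sum_const, nsmul_eq_mul]
    have h0 : (0 : ℝ) ≤ N * (1 + (N - 1) * (-s)) := le_trans hnn htot
    have hNpos : (0 : ℝ) < N := by positivity ; 
    have h3 : 0 ≤ 1 + ((N : ℝ) - 1) * (-s) := nonneg_of_mul_nonneg_right h0 hNpos
    -- (N-1) * s ≤ 1
    have h4 : ((N : ℝ) - 1) * s ≤ 1 := by linarith
    have h5 : (N : ℝ) - 1 ≤ 1 / s := by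
      rw [le_div_iff₀ hs]; linarith
    linarith
end

section
/- If two clients j, j' satisfy (1+δ')(C_j + M_j) ≤ C_{j'} + M_{j'}, and cost_j(j') ≤ C_j + M_j + (2−γ)M_{j'} + (γ−1)D_{j'}, then cost_j(j') ≤ (1 − 2δ'/(1+δ'))·C_{j'} + (3−γ)M_{j'} + (γ−1)D_{j'}. -/
/-!
Since `Cⱼ' ≤ Mⱼ'`, shrinking `Cⱼ' + Mⱼ'` by the factor `1 + δ'` removes at least
`2δ'/(1+δ')·Cⱼ'`; the block condition bounds `Cⱼ + Mⱼ` by exactly this shrunk quantity.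
-/

lemma one_sub_two_mul_div_one_add {δ : ℝ} (hδ : 1 + δ ≠ 0) :
    1 - 2 * δ / (1 + δ) = (1 - δ) / (1 + δ) := by
  field_simp
  ring

lemma add_div_one_add_le {x y δ : ℝ} (hxy : x ≤ y) (hδ : 0 ≤ δ) :
    (x + y) / (1 + δ) ≤ (1 - 2 * δ / (1 + δ)) * x + y := by
  have hpos : 0 < 1 + δ := by linarith
  rw [one_sub_two_mul_div_one_add hpos.ne', div_mul_eq_mul_div, div_le_iff₀ hpos, add_mul,
    div_mul_cancel₀ _ hpos.ne']
  linarith [mul_le_mul_of_nonneg_left hxy hδ]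

theorem far_block_saving_general (Cj Mj Cj' Mj' Dj' γ δ' cost : ℝ)
    (hCM' : Cj' ≤ Mj')
    (hδ' : 0 < δ')
    (hblock : (1 + δ') * (Cj + Mj) ≤ Cj' + Mj')
    (hcost : cost ≤ Cj + Mj + (2 - γ) * Mj' + (γ - 1) * Dj') :
    cost ≤ (1 - 2 * δ' / (1 + δ')) * Cj' + (3 - γ) * Mj' + (γ - 1) * Dj' := by
  have hshrink : Cj + Mj ≤ (Cj' + Mj') / (1 + δ') :=
    (le_div_iff₀' (by linarith)).2 hblock
  linarith [hshrink.trans (add_div_one_add_le hCM' hδ'.le)]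

/-- Observation 5.2: a client at least two blocks above the center automatically
satisfies the improved rerouting bound with savings factor `2δ'/(1+δ')`. -/
theorem far_block_saving (Cj Mj Cj' Mj' Dj' γ δ' cost : ℝ)
    (hCj : 0 ≤ Cj) (hMj : Cj ≤ Mj)
    (hC' : 0 ≤ Cj') (hCM' : Cj' ≤ Mj') (hMD' : Mj' ≤ Dj')
    (hγ1 : 1 < γ) (hγ2 : γ < 2) (hδ' : 0 < δ')
    (hcost0 : 0 ≤ cost)
    (hblock : (1 + δ') * (Cj + Mj) ≤ Cj' + Mj')
    (hcost : cost ≤ Cj + Mj + (2 - γ) * Mj' + (γ - 1) * Dj') :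
    cost ≤ (1 - 2 * δ' / (1 + δ')) * Cj' + (3 - γ) * Mj' + (γ - 1) * Dj' :=
  far_block_saving_general Cj Mj Cj' Mj' Dj' γ δ' cost hCM' hδ' hblock hcost
end

section
/- Let γ ∈ (1,2), and define g(γ) = 1/e + e^{−γ} − (γ−1)(1 − 1/e + e^{−γ}). Then g is strictly decreasing on (1,2), g(1.6) > 0, and g(1.7) < 0; hence g has a unique root γ* in (1.6, 1.7), and for γ = 1.6774, g(γ) ≤ 0. -/
noncomputable def gBA (γ : ℝ) : ℝ :=
  1 / Real.exp 1 + Real.exp (-γ) - (γ - 1) * (1 - 1 / Real.exp 1 + Real.exp (-γ))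

lemma gBA_hasDerivAt (x : ℝ) :
    HasDerivAt gBA ((x - 3) * Real.exp (-x) - (1 - 1 / Real.exp 1)) x := by
  have hexp : HasDerivAt (fun y : ℝ => Real.exp (-y)) (-Real.exp (-x)) x := by
    simpa [Function.comp_def] using (Real.hasDerivAt_exp (-x)).comp x ((hasDerivAt_id x).neg)
  have h1 : HasDerivAt (fun y : ℝ => 1 / Real.exp 1 + Real.exp (-y)) (-Real.exp (-x)) x := by
    simpa [Pi.add_def] using (hasDerivAt_const x (1 / Real.exp 1)).add hexp
  have h2 : HasDerivAt (fun y : ℝ => (y - 1) * (1 - 1 / Real.exp 1 + Real.exp (-y)))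
      (1 * (1 - 1 / Real.exp 1 + Real.exp (-x)) + (x - 1) * (-Real.exp (-x))) x := by
    have := (((hasDerivAt_id x).sub_const 1).mul
      ((hasDerivAt_const x (1 - 1 / Real.exp 1)).add hexp))
    simpa [Pi.add_def, Pi.mul_def] using this
  have := h1.sub h2
  simp only [Pi.sub_def] at this
  refine this.congr_deriv ?_
  ring

lemma gBA_strictAntiOn : StrictAntiOn gBA (Set.Ioo 1 2) := by
  have he : (0:ℝ) < Real.exp 1 := Real.exp_pos 1
  have he1 : 1 / Real.exp 1 < 1 := by
    rw [div_lt_one he]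
    have := Real.exp_one_gt_d9
    linarith
  apply strictAntiOn_of_deriv_neg (convex_Ioo 1 2)
  · exact (Continuous.continuousOn (by
      have : Continuous gBA := by
        unfold gBA
        fun_prop
      exact this))
  · intro x hx
    rw [interior_Ioo] at hx
    rw [(gBA_hasDerivAt x).deriv]
    have h1 : (x - 3) * Real.exp (-x) < 0 :=
      mul_neg_of_neg_of_pos (by linarith [hx.2]) (Real.exp_pos _)
    linarith

lemma exp_16774_lb : (5.3516 : ℝ) ≤ Real.exp 1.6774 := by
  have h := Real.sum_le_exp_of_nonneg (x := 1.6774) (by norm_num) 14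
  refine le_trans ?_ h
  rw [Finset.sum_range_succ, Finset.sum_range_succ, Finset.sum_range_succ,
    Finset.sum_range_succ, Finset.sum_range_succ, Finset.sum_range_succ,
    Finset.sum_range_succ, Finset.sum_range_succ, Finset.sum_range_succ,
    Finset.sum_range_succ, Finset.sum_range_succ, Finset.sum_range_succ,
    Finset.sum_range_succ, Finset.sum_range_succ, Finset.sum_range_zero]
  norm_num [Nat.factorial]

lemma exp_17_lb : (5 : ℝ) ≤ Real.exp 1.7 := by
  have h := Real.sum_le_exp_of_nonneg (x := 1.7) (by norm_num) 6
  refine le_trans ?_ h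
  rw [Finset.sum_range_succ, Finset.sum_range_succ, Finset.sum_range_succ,
    Finset.sum_range_succ, Finset.sum_range_succ, Finset.sum_range_succ,
    Finset.sum_range_zero]
  norm_num [Nat.factorial]

lemma exp_16_ub : Real.exp 1.6 ≤ (7.39 : ℝ) := by
  have h1 : Real.exp 1.6 ≤ Real.exp 2 := Real.exp_le_exp.2 (by norm_num)
  have h2 : Real.exp 2 = Real.exp 1 * Real.exp 1 := by
    rw [← Real.exp_add]; norm_num
  have h3 := Real.exp_one_lt_d9
  nlinarith [Real.exp_pos 1]

lemma gBA_16_pos : 0 < gBA 1.6 := by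
  have hz : (1:ℝ)/7.39 ≤ Real.exp (-1.6) := by
    rw [Real.exp_neg, show ((1:ℝ)/7.39) = (7.39:ℝ)⁻¹ by norm_num]
    exact inv_anti₀ (Real.exp_pos _) exp_16_ub
  have he : Real.exp 1 < 2.7182818286 := Real.exp_one_lt_d9
  have hepos : (0:ℝ) < Real.exp 1 := Real.exp_pos 1
  have h1e : (1:ℝ)/2.7182818286 < 1 / Real.exp 1 :=
    div_lt_div_of_pos_left one_pos hepos he
  unfold gBA
  nlinarith

lemma gBA_17_neg : gBA 1.7 < 0 := by
  have hy : Real.exp (-1.7) ≤ 1/5 := by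
    rw [Real.exp_neg, show ((1:ℝ)/5) = (5:ℝ)⁻¹ by norm_num]
    exact inv_anti₀ (by norm_num) exp_17_lb
  have he : (2.7182818283:ℝ) < Real.exp 1 := Real.exp_one_gt_d9
  have hepos : (0:ℝ) < Real.exp 1 := Real.exp_pos 1
  have h1e : 1 / Real.exp 1 < (1:ℝ)/2.7182818283 :=
    div_lt_div_of_pos_left one_pos (by norm_num) he
  unfold gBA
  nlinarith

lemma gBA_16774_nonpos : gBA 1.6774 ≤ 0 := by
  have hx : Real.exp (-1.6774) ≤ 1/5.3516 := by
    rw [Real.exp_neg, show ((1:ℝ)/5.3516) = (5.3516:ℝ)⁻¹ by norm_num]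
    exact inv_anti₀ (by norm_num) exp_16774_lb
  have he : (2.7182818283:ℝ) < Real.exp 1 := Real.exp_one_gt_d9
  have hepos : (0:ℝ) < Real.exp 1 := Real.exp_pos 1
  have h1e : 1 / Real.exp 1 < (1:ℝ)/2.7182818283 :=
    div_lt_div_of_pos_left one_pos (by norm_num) he
  unfold gBA
  nlinarith

/-- The Byrka–Aardal coefficient `g` is strictly decreasing on `(1,2)`, positive at
`1.6`, negative at `1.7`, has a unique root in `(1.6,1.7)`, and `g(1.6774) ≤ 0`. -/
theorem gBA_root : StrictAntiOn gBA (Set.Ioo 1 2) ∧ 0 < gBA 1.6 ∧ gBA 1.7 < 0 ∧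
    (∃! γ : ℝ, γ ∈ Set.Ioo (1.6 : ℝ) 1.7 ∧ gBA γ = 0) ∧ gBA 1.6774 ≤ 0 := by
  have hanti := gBA_strictAntiOn
  have hsub : Set.Ioo (1.6:ℝ) 1.7 ⊆ Set.Ioo (1:ℝ) 2 := by
    intro x hx; exact ⟨by linarith [hx.1], by linarith [hx.2]⟩
  have hcont : Continuous gBA := by unfold gBA; fun_prop
  refine ⟨hanti, gBA_16_pos, gBA_17_neg, ?_, gBA_16774_nonpos⟩
  have hivt := intermediate_value_Ioo' (a := (1.6:ℝ)) (b := 1.7) (by norm_num)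
    hcont.continuousOn
  have h0 : (0:ℝ) ∈ Set.Ioo (gBA 1.7) (gBA 1.6) := ⟨gBA_17_neg, gBA_16_pos⟩
  obtain ⟨γ, hγ, hγ0⟩ := hivt h0
  refine ⟨γ, ⟨hγ, hγ0⟩, ?_⟩
  rintro γ' ⟨hγ', hγ'0⟩
  exact hanti.injOn (hsub hγ') (hsub hγ) (by rw [hγ0, hγ'0])
end

section
/- In the reduction instance (facilities at e_i with opening cost λ > 0, clients at e_i + e_j for edges (i,j) ∈ E), if U ⊆ V is an independent set of G = (V,E) with |U| = qn, then opening S = V ∖ U yields total cost exactly λ(1−q)n + |E|. -/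
lemma coord_le_dist {n : ℕ} (x y : EuclideanSpace ℝ (Fin n)) (m : Fin n) :
    |x m - y m| ≤ dist x y := by
  rw [EuclideanSpace.dist_eq]
  calc |x m - y m| = Real.sqrt (|x m - y m|^2) := by
        rw [Real.sqrt_sq_eq_abs, abs_abs]
    _ ≤ _ := by
        apply Real.sqrt_le_sqrt
        have := Finset.single_le_sum (f := fun i => |x i - y i|^2)
          (fun i _ => sq_nonneg _) (Finset.mem_univ m)
        simpa [Real.dist_eq] using this

lemma inf_eq_one {n : ℕ} (i j : Fin n) (hij : i ≠ j) (S : Finset (Fin n))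
    (hS : i ∈ S ∨ j ∈ S) :
    sInf ((fun k => dist
        (EuclideanSpace.single i (1:ℝ) + EuclideanSpace.single j 1)
        (EuclideanSpace.single k 1)) '' ↑S) = 1 := by
  set x : EuclideanSpace ℝ (Fin n) := EuclideanSpace.single i (1:ℝ) + EuclideanSpace.single j 1
    with hxdef
  have hx : ∀ m, x m = (if m = i then (1:ℝ) else 0) + (if m = j then 1 else 0) := by
    intro m
    simp [hxdef, EuclideanSpace.single_apply]
  have hdi : dist x (EuclideanSpace.single i (1:ℝ)) = 1 := by
    have hsub : x - EuclideanSpace.single i (1:ℝ) = EuclideanSpace.single j 1 := by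
      ext m
      by_cases h1 : m = i <;> by_cases h2 : m = j <;>
        simp_all [hx, EuclideanSpace.single_apply, PiLp.sub_apply]
    rw [dist_eq_norm, hsub, EuclideanSpace.norm_single, norm_one]
  have hdj : dist x (EuclideanSpace.single j (1:ℝ)) = 1 := by
    have hsub : x - EuclideanSpace.single j (1:ℝ) = EuclideanSpace.single i 1 := by
      ext m
      by_cases h1 : m = i <;> by_cases h2 : m = j <;>
        simp_all [hx, EuclideanSpace.single_apply, PiLp.sub_apply]
    rw [dist_eq_norm, hsub, EuclideanSpace.norm_single, norm_one]
  have hlb : ∀ d ∈ (fun k => dist x (EuclideanSpace.single k 1)) '' ↑S, (1:ℝ) ≤ d := by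
    rintro d ⟨k, hk, rfl⟩
    obtain ⟨m, hm, hmk⟩ : ∃ m, (m = i ∨ m = j) ∧ m ≠ k := by
      rcases eq_or_ne i k with rfl | h
      · exact ⟨j, Or.inr rfl, fun h => hij h.symm⟩
      · exact ⟨i, Or.inl rfl, h⟩
    have h1 : |x m - EuclideanSpace.single k (1:ℝ) m| = 1 := by
      rw [hx, EuclideanSpace.single_apply, if_neg hmk]
      rcases hm with rfl | rfl
      · rcases eq_or_ne m j with rfl | hmj <;> simp_all
      · rcases eq_or_ne m i with rfl | hmi <;> simp_all
    calc (1:ℝ) = |x m - EuclideanSpace.single k (1:ℝ) m| := h1.symm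
      _ ≤ _ := coord_le_dist _ _ m
  apply le_antisymm
  · rcases hS with hi | hj
    · exact csInf_le ⟨1, hlb⟩ ⟨i, by simpa using hi, hdi⟩
    · exact csInf_le ⟨1, hlb⟩ ⟨j, by simpa using hj, hdj⟩
  · apply le_csInf
    · rcases hS with hi | hj
      exacts [⟨_, ⟨i, by simpa using hi, rfl⟩⟩, ⟨_, ⟨j, by simpa using hj, rfl⟩⟩]
    · exact hlb

/-- Completeness of the reduction: if `U` is an independent set of size `q n`,
opening `S = V ∖ U` yields total cost exactly `λ(1−q)n + |E|`. -/
theorem reduction_completeness (n : ℕ) (hn : 0 < n)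
    (E : Finset (Fin n × Fin n)) (hE : ∀ e ∈ E, e.1 ≠ e.2)
    (U : Finset (Fin n)) (q lam : ℝ)
    (hq : q ∈ Set.Ioo (0:ℝ) 1) (hlam : 0 < lam)
    (hind : ∀ e ∈ E, e.1 ∉ U ∨ e.2 ∉ U)
    (hU : (U.card : ℝ) = q * n) :
    lam * ((Finset.univ \ U : Finset (Fin n)).card : ℝ)
      + ∑ e ∈ E, sInf ((fun k => dist
          (EuclideanSpace.single e.1 (1:ℝ) + EuclideanSpace.single e.2 1)
          (EuclideanSpace.single k 1)) '' ↑(Finset.univ \ U : Finset (Fin n)))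
      = lam * (1 - q) * n + E.card := by
  have hsum : ∑ e ∈ E, sInf ((fun k => dist
          (EuclideanSpace.single e.1 (1:ℝ) + EuclideanSpace.single e.2 1)
          (EuclideanSpace.single k 1)) '' ↑(Finset.univ \ U : Finset (Fin n)))
      = E.card := by
    rw [Finset.sum_congr rfl (fun e he => inf_eq_one e.1 e.2 (hE e he) _ ?_), Finset.sum_const,
      nsmul_eq_mul, mul_one]
    rcases hind e he with h | h
    exacts [Or.inl (by simp [h]), Or.inr (by simp [h])]
  rw [hsum]
  have hle : U.card ≤ n := by simpa using Finset.card_le_univ U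
  have hcard : ((Finset.univ \ U : Finset (Fin n)).card : ℝ) = n - U.card := by
    rw [Finset.card_sdiff_of_subset (Finset.subset_univ U), Finset.card_univ, Fintype.card_fin,
      Nat.cast_sub hle]
  rw [hcard, hU]
  ring
end

section
/- In the reduction instance, for any opened set S ⊆ V, if t edges of G have both endpoints in V ∖ S, then the total cost is exactly λ|S| + (|E| − t)·1 + t·√3, which is at least λ|S| + |E| + (√3 − 1)t. -/
lemma dist_single_pair (n : ℕ) (a b k : Fin n) (hab : a ≠ b) :
    dist (EuclideanSpace.single a (1:ℝ) + EuclideanSpace.single b 1)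
      (EuclideanSpace.single k 1)
    = if k = a ∨ k = b then 1 else Real.sqrt 3 := by
  rw [EuclideanSpace.dist_eq]
  have hterm : ∀ i : Fin n,
      dist (((EuclideanSpace.single a (1:ℝ) + EuclideanSpace.single b 1 :
          EuclideanSpace ℝ (Fin n))) i)
        (EuclideanSpace.single k (1:ℝ) i) ^ 2
      = ((if i = a then (1:ℝ) else 0) + (if i = b then 1 else 0)
          - (if i = k then 1 else 0)) ^ 2 := by
    intro i
    simp [Real.dist_eq, EuclideanSpace.single_apply, sq_abs]
  simp only [hterm]
  by_cases hka : k = a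
  · subst hka
    have key : ∀ i : Fin n,
        ((if i = k then (1:ℝ) else 0) + (if i = b then 1 else 0)
          - (if i = k then 1 else 0)) ^ 2 = (if i = b then (1:ℝ) else 0) := by
      intro i; by_cases h1 : i = k <;> by_cases h2 : i = b <;> simp [h1, h2]
    rw [Finset.sum_congr rfl (fun i _ => key i), Finset.sum_ite_eq',
      if_pos (Finset.mem_univ b), if_pos (Or.inl rfl), Real.sqrt_one]
  · by_cases hkb : k = b
    · subst hkb
      have key : ∀ i : Fin n,
          ((if i = a then (1:ℝ) else 0) + (if i = k then 1 else 0)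
            - (if i = k then 1 else 0)) ^ 2 = (if i = a then (1:ℝ) else 0) := by
        intro i; by_cases h1 : i = a <;> by_cases h2 : i = k <;> simp [h1, h2]
      rw [Finset.sum_congr rfl (fun i _ => key i), Finset.sum_ite_eq',
        if_pos (Finset.mem_univ a), if_pos (Or.inr rfl), Real.sqrt_one]
    · have key : ∀ i : Fin n,
          ((if i = a then (1:ℝ) else 0) + (if i = b then 1 else 0)
            - (if i = k then 1 else 0)) ^ 2
          = (if i = a then (1:ℝ) else 0) + (if i = b then 1 else 0)
            + (if i = k then 1 else 0) := by
        intro i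
        by_cases h1 : i = a <;> by_cases h2 : i = b <;> by_cases h3 : i = k <;>
          simp_all <;> ring
      rw [Finset.sum_congr rfl (fun i _ => key i), Finset.sum_add_distrib,
        Finset.sum_add_distrib, Finset.sum_ite_eq', Finset.sum_ite_eq',
        Finset.sum_ite_eq', if_pos (Finset.mem_univ a), if_pos (Finset.mem_univ b),
        if_pos (Finset.mem_univ k), if_neg (by tauto)]
      norm_num

lemma sInf_dist_single (n : ℕ) (a b : Fin n) (hab : a ≠ b)
    (S : Finset (Fin n)) (hS : S.Nonempty) :
    sInf ((fun k => dist (EuclideanSpace.single a (1:ℝ) + EuclideanSpace.single b 1)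
        (EuclideanSpace.single k 1)) '' ↑S)
    = if a ∉ S ∧ b ∉ S then Real.sqrt 3 else 1 := by
  have h13 : (1:ℝ) ≤ Real.sqrt 3 := by
    rw [show (1:ℝ) = Real.sqrt 1 by simp]
    exact Real.sqrt_le_sqrt (by norm_num)
  by_cases hout : a ∉ S ∧ b ∉ S
  · rw [if_pos hout]
    have himg : (fun k => dist (EuclideanSpace.single a (1:ℝ) + EuclideanSpace.single b 1)
        (EuclideanSpace.single k 1)) '' ↑S = {Real.sqrt 3} := by
      obtain ⟨x, hx⟩ := hS
      apply Set.eq_singleton_iff_nonempty_unique_mem.2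
      constructor
      · exact ⟨_, Set.mem_image_of_mem _ (by exact_mod_cast hx)⟩
      · rintro y ⟨k, hk, rfl⟩
        have hk' : k ∈ S := by exact_mod_cast hk
        show dist (EuclideanSpace.single a (1:ℝ) + EuclideanSpace.single b 1)
          (EuclideanSpace.single k 1) = Real.sqrt 3
        rw [dist_single_pair n a b k hab, if_neg]
        rintro (rfl | rfl)
        · exact hout.1 hk'
        · exact hout.2 hk'
    rw [himg, csInf_singleton]
  · rw [if_neg hout]
    have hmem : ∃ k ∈ S, k = a ∨ k = b := by
      by_cases ha : a ∈ S
      · exact ⟨a, ha, Or.inl rfl⟩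
      · have hb : b ∈ S := by tauto
        exact ⟨b, hb, Or.inr rfl⟩
    obtain ⟨k, hkS, hk⟩ := hmem
    apply IsLeast.csInf_eq
    constructor
    · refine ⟨k, by exact_mod_cast hkS, ?_⟩
      show dist (EuclideanSpace.single a (1:ℝ) + EuclideanSpace.single b 1)
        (EuclideanSpace.single k 1) = 1
      rw [dist_single_pair n a b k hab, if_pos hk]
    · rintro y ⟨m, hm, rfl⟩
      show 1 ≤ dist (EuclideanSpace.single a (1:ℝ) + EuclideanSpace.single b 1)
        (EuclideanSpace.single m 1)
      rw [dist_single_pair n a b m hab]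
      split
      · exact le_refl 1
      · exact h13

/-- Soundness of the reduction: if `t` edges have both endpoints outside the opened
set `S ≠ ∅`, the total cost equals `λ|S| + (|E|−t) + t√3 ≥ λ|S| + |E| + (√3−1)t`. -/
theorem reduction_soundness (n : ℕ)
    (E : Finset (Fin n × Fin n)) (hE : ∀ e ∈ E, e.1 ≠ e.2)
    (S : Finset (Fin n)) (hS : S.Nonempty) (lam : ℝ) (hlam : 0 < lam)
    (t : ℕ) (ht : t = (E.filter (fun e => e.1 ∉ S ∧ e.2 ∉ S)).card) :
    (lam * (S.card : ℝ)
      + ∑ e ∈ E, sInf ((fun k => dist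
          (EuclideanSpace.single e.1 (1:ℝ) + EuclideanSpace.single e.2 1)
          (EuclideanSpace.single k 1)) '' ↑S)
      = lam * S.card + ((E.card : ℝ) - t) * 1 + t * Real.sqrt 3)
    ∧ lam * (S.card : ℝ) + ((E.card : ℝ) - t) * 1 + t * Real.sqrt 3
      ≥ lam * S.card + E.card + (Real.sqrt 3 - 1) * t := by
  constructor
  · have hsum : ∑ e ∈ E, sInf ((fun k => dist
          (EuclideanSpace.single e.1 (1:ℝ) + EuclideanSpace.single e.2 1)
          (EuclideanSpace.single k 1)) '' ↑S)
        = ∑ e ∈ E, (if e.1 ∉ S ∧ e.2 ∉ S then Real.sqrt 3 else 1) := by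
      apply Finset.sum_congr rfl
      intro e he
      exact sInf_dist_single n e.1 e.2 (hE e he) S hS
    rw [hsum, Finset.sum_ite, Finset.sum_const, Finset.sum_const]
    have hle : (E.filter (fun e => e.1 ∉ S ∧ e.2 ∉ S)).card ≤ E.card :=
      Finset.card_filter_le _ _
    have hcard : (E.filter (fun e => ¬(e.1 ∉ S ∧ e.2 ∉ S))).card
        = E.card - t := by
      rw [ht, Finset.filter_not, Finset.card_sdiff_of_subset (Finset.filter_subset _ _)]
    rw [hcard, nsmul_eq_mul, nsmul_eq_mul]
    push_cast [Nat.cast_sub (ht ▸ hle)]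
    rw [← ht]
    ring
  · have : ((E.card : ℝ) - t) * 1 + t * Real.sqrt 3
        = (E.card : ℝ) + (Real.sqrt 3 - 1) * t := by ring
    linarith
end
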